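/- arXiv:1803.02848 — 4 statements merged into one kernel-verified Lean document; each statement's English description precedes it below -/
import Mathlib

section
/- With the setup of the randomized Kaczmarz step with mismatched adjoint (rows aᵢ, vᵢ with ⟨aᵢ, vᵢ⟩ > 0, probabilities pᵢ, D = diag(pᵢ/⟨aᵢ, vᵢ⟩), S = diag(‖vᵢ‖²/⟨aᵢ, vᵢ⟩), A x̂ = b), the expected squared error of one step satisfies E(‖x⁺ − x̂‖²) = ‖x − x̂‖² − ⟨x − x̂, (VᵀDA + AᵀDV − AᵀSDA)(x − x̂)⟩. -/
open Matrix Finset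

noncomputable def enorm' {n : ℕ} (v : Fin n → ℝ) : ℝ := Real.sqrt (v ⬝ᵥ v)

lemma enorm'_sq {n : ℕ} (v : Fin n → ℝ) : enorm' v ^ 2 = v ⬝ᵥ v :=
  Real.sq_sqrt (Finset.sum_nonneg fun i _ => mul_self_nonneg (v i))

lemma quad_form {m n : ℕ} (P Q : Matrix (Fin m) (Fin n) ℝ) (d : Fin m → ℝ)
    (e : Fin n → ℝ) :
    e ⬝ᵥ (Pᵀ * Matrix.diagonal d * Q).mulVec e
      = ∑ i, d i * ((P i ⬝ᵥ e) * (Q i ⬝ᵥ e)) := by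
  rw [← Matrix.mulVec_mulVec, ← Matrix.mulVec_mulVec, Matrix.dotProduct_mulVec,
    Matrix.vecMul_transpose]
  simp only [dotProduct, Matrix.mulVec_diagonal]
  exact Finset.sum_congr rfl fun i _ => by
    simp only [Matrix.mulVec, dotProduct]; ring

lemma expand_sq {n : ℕ} (e v : Fin n → ℝ) (c : ℝ) :
    (e - c • v) ⬝ᵥ (e - c • v)
      = e ⬝ᵥ e - 2 * c * (v ⬝ᵥ e) + c ^ 2 * (v ⬝ᵥ v) := by
  simp only [dotProduct_sub, sub_dotProduct, smul_dotProduct,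
    dotProduct_smul, smul_eq_mul, dotProduct_comm e v]
  ring

theorem expected_squared_error_one_step {m n : ℕ} (A V : Matrix (Fin m) (Fin n) ℝ)
    (p : Fin m → ℝ) (hp : ∀ i, 0 < p i) (hps : ∑ i, p i = 1)
    (hav : ∀ i, 0 < A i ⬝ᵥ V i)
    (b : Fin m → ℝ) (xhat : Fin n → ℝ) (hb : A.mulVec xhat = b)
    (x : Fin n → ℝ)
    (D S : Matrix (Fin m) (Fin m) ℝ)
    (hD : D = Matrix.diagonal (fun i => p i / (A i ⬝ᵥ V i)))
    (hS : S = Matrix.diagonal (fun i => (enorm' (V i)) ^ 2 / (A i ⬝ᵥ V i))) :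
    ∑ i, p i * (enorm' (x - ((A i ⬝ᵥ x - b i) / (A i ⬝ᵥ V i)) • V i - xhat)) ^ 2
      = (enorm' (x - xhat)) ^ 2
        - (x - xhat) ⬝ᵥ ((Vᵀ * D * A + Aᵀ * D * V - Aᵀ * S * D * A).mulVec (x - xhat)) := by
  have hb' : ∀ i, b i = A i ⬝ᵥ xhat := fun i => by rw [← hb]; rfl
  have hASD : Aᵀ * S * D * A
      = Aᵀ * Matrix.diagonal
          (fun i => (enorm' (V i))^2 / (A i ⬝ᵥ V i) * (p i / (A i ⬝ᵥ V i))) * A := by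
    rw [hS, hD, Matrix.mul_assoc Aᵀ, Matrix.diagonal_mul_diagonal]
  rw [Matrix.sub_mulVec, Matrix.add_mulVec, dotProduct_sub, dotProduct_add,
    hASD, hD, quad_form, quad_form, quad_form, enorm'_sq]
  have key : ∀ i, x - ((A i ⬝ᵥ x - b i) / (A i ⬝ᵥ V i)) • V i - xhat
      = (x - xhat) - ((A i ⬝ᵥ (x - xhat)) / (A i ⬝ᵥ V i)) • V i := by
    intro i
    rw [hb' i, dotProduct_sub]
    abel
  have hee : (x - xhat) ⬝ᵥ (x - xhat) = ∑ i, p i * ((x - xhat) ⬝ᵥ (x - xhat)) := by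
    rw [← Finset.sum_mul, hps, one_mul]
  calc ∑ i, p i * (enorm' (x - ((A i ⬝ᵥ x - b i) / (A i ⬝ᵥ V i)) • V i - xhat)) ^ 2
      = ∑ i, p i * ((x - xhat) ⬝ᵥ (x - xhat)
          - 2 * ((A i ⬝ᵥ (x - xhat)) / (A i ⬝ᵥ V i)) * (V i ⬝ᵥ (x - xhat))
          + ((A i ⬝ᵥ (x - xhat)) / (A i ⬝ᵥ V i)) ^ 2 * (V i ⬝ᵥ V i)) := by
        refine Finset.sum_congr rfl fun i _ => ?_
        rw [key i, enorm'_sq, expand_sq]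
    _ = (x - xhat) ⬝ᵥ (x - xhat)
        - (∑ i, p i / (A i ⬝ᵥ V i) * ((V i ⬝ᵥ (x - xhat)) * (A i ⬝ᵥ (x - xhat)))
          + ∑ i, p i / (A i ⬝ᵥ V i) * ((A i ⬝ᵥ (x - xhat)) * (V i ⬝ᵥ (x - xhat)))
          - ∑ i, (enorm' (V i))^2 / (A i ⬝ᵥ V i) * (p i / (A i ⬝ᵥ V i))
              * ((A i ⬝ᵥ (x - xhat)) * (A i ⬝ᵥ (x - xhat)))) := by
        conv_rhs => rw [hee]
        rw [← Finset.sum_add_distrib, ← Finset.sum_sub_distrib, ← Finset.sum_sub_distrib]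
        refine Finset.sum_congr rfl fun i _ => ?_
        rw [enorm'_sq]
        have hav' : A i ⬝ᵥ V i ≠ 0 := ne_of_gt (hav i)
        field_simp
        ring
end

section
/- With the setup of the randomized Kaczmarz step with mismatched adjoint, if λ := λ_min(VᵀDA + AᵀDV − AᵀSDA) > 0, then E(‖x⁺ − x̂‖²) ≤ (1 − λ)·‖x − x̂‖². -/
open Matrix Finset

/-!
With `e = x - x̂`, consistency `A x̂ = b` turns the error of the step along row `i` into
`e - (⟨aᵢ, e⟩ / ⟨aᵢ, vᵢ⟩) vᵢ`. Expanding its square and averaging with the weights `pᵢ` gives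
exactly `‖e‖² - eᵀ M e` for `M = VᵀDA + AᵀDV - AᵀSDA`. Since every eigenvalue of `M` is at least
`λ`, the spectral theorem makes `M - λ I` positive semidefinite, so `eᵀ M e ≥ λ ‖e‖²`.
-/

namespace Matrix

open scoped ComplexOrder

variable {𝕜 : Type*} [RCLike 𝕜] {n : Type*} [Fintype n] [DecidableEq n]

lemma IsHermitian.posSemidef_sub_smul_one {A : Matrix n n 𝕜} (hA : A.IsHermitian) {c : ℝ}
    (hc : ∀ i, c ≤ hA.eigenvalues i) : (A - c • (1 : Matrix n n 𝕜)).PosSemidef := by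
  have hdiag : diagonal (RCLike.ofReal ∘ (hA.eigenvalues - fun _ => c)) =
      diagonal (RCLike.ofReal ∘ hA.eigenvalues) - c • (1 : Matrix n n 𝕜) := by
    ext i j
    by_cases h : i = j <;> simp [h, RCLike.real_smul_eq_coe_mul]
  have hconj : A - c • (1 : Matrix n n 𝕜) = Unitary.conjStarAlgAut 𝕜 _ hA.eigenvectorUnitary
      (diagonal (RCLike.ofReal ∘ (hA.eigenvalues - fun _ => c))) := by
    rw [hdiag, map_sub, RCLike.real_smul_eq_coe_smul (K := 𝕜), map_smul, map_one,
      ← hA.spectral_theorem]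
  rw [hconj, Unitary.conjStarAlgAut_apply]
  simpa [Unitary.isUnit_coe.posSemidef_star_right_conjugate_iff, Pi.le_def] using hc

lemma IsHermitian.mul_dotProduct_self_le_dotProduct_mulVec {A : Matrix n n ℝ}
    (hA : A.IsHermitian) {c : ℝ} (hc : ∀ i, c ≤ hA.eigenvalues i) (x : n → ℝ) :
    c * (x ⬝ᵥ x) ≤ x ⬝ᵥ A *ᵥ x := by
  have hpsd := (hA.posSemidef_sub_smul_one hc).dotProduct_mulVec_nonneg x
  rw [star_trivial, sub_mulVec, smul_mulVec, one_mulVec, dotProduct_sub, dotProduct_smul,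
    smul_eq_mul] at hpsd
  linarith

end Matrix

lemma dotProduct_sub_smul_self {R : Type*} [CommRing R] {n : Type*} [Fintype n]
    (u v : n → R) (t : R) :
    (u - t • v) ⬝ᵥ (u - t • v) = u ⬝ᵥ u - 2 * t * (v ⬝ᵥ u) + t ^ 2 * (v ⬝ᵥ v) := by
  simp only [dotProduct_sub, sub_dotProduct, smul_dotProduct, dotProduct_smul, smul_eq_mul,
    dotProduct_comm u v]
  ring

lemma dotProduct_transpose_mul_diagonal_mul_mulVec {R : Type*} [CommSemiring R]
    {m n : Type*} [Fintype m] [Fintype n] [DecidableEq m]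
    (B C : Matrix m n R) (d : m → R) (x : n → R) :
    x ⬝ᵥ (Bᵀ * diagonal d * C) *ᵥ x = ∑ i, d i * (B *ᵥ x) i * (C *ᵥ x) i := by
  rw [← mulVec_mulVec, ← mulVec_mulVec, dotProduct_mulVec, vecMul_transpose]
  simp only [dotProduct, mulVec_diagonal]
  exact sum_congr rfl fun i _ => by ring

section Kaczmarz

variable {K : Type*} [Field K] {m n : Type*} [Fintype n]

def kaczmarzStep (A V : Matrix m n K) (b : m → K) (i : m) (x : n → K) : n → K :=
  x - ((A i ⬝ᵥ x - b i) / (A i ⬝ᵥ V i)) • V i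

lemma kaczmarzStep_sub_of_mulVec_eq {A V : Matrix m n K} {b : m → K} {xhat : n → K}
    (hb : A *ᵥ xhat = b) (i : m) (x : n → K) :
    kaczmarzStep A V b i x - xhat
      = (x - xhat) - ((A *ᵥ (x - xhat)) i / (A i ⬝ᵥ V i)) • V i := by
  rw [kaczmarzStep, mulVec_sub, ← hb, sub_right_comm]
  rfl

lemma sum_mul_kaczmarz_error_dotProduct_self [Fintype m] [DecidableEq m]
    (A V : Matrix m n K) (p : m → K) (hp : ∑ i, p i = 1) (e : n → K) :
    ∑ i, p i * ((e - ((A *ᵥ e) i / (A i ⬝ᵥ V i)) • V i) ⬝ᵥ (e - ((A *ᵥ e) i / (A i ⬝ᵥ V i)) • V i))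
      = e ⬝ᵥ e - e ⬝ᵥ (Vᵀ * diagonal (fun i => p i / (A i ⬝ᵥ V i)) * A
          + Aᵀ * diagonal (fun i => p i / (A i ⬝ᵥ V i)) * V
          - Aᵀ * diagonal (fun i => (V i ⬝ᵥ V i) / (A i ⬝ᵥ V i))
              * diagonal (fun i => p i / (A i ⬝ᵥ V i)) * A) *ᵥ e := by
  rw [Matrix.mul_assoc Aᵀ (diagonal _) (diagonal _), diagonal_mul_diagonal, sub_mulVec,
    add_mulVec, dotProduct_sub, dotProduct_add, dotProduct_transpose_mul_diagonal_mul_mulVec,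
    dotProduct_transpose_mul_diagonal_mul_mulVec, dotProduct_transpose_mul_diagonal_mul_mulVec,
    ← one_mul (e ⬝ᵥ e), ← hp, sum_mul, ← sum_add_distrib, ← sum_sub_distrib, ← sum_sub_distrib]
  refine sum_congr rfl fun i _ => ?_
  rw [dotProduct_sub_smul_self, show V i ⬝ᵥ e = (V *ᵥ e) i from rfl]
  ring

end Kaczmarz

theorem expected_squared_error_contraction_general {m n : ℕ} (A V : Matrix (Fin m) (Fin n) ℝ)
    (p : Fin m → ℝ) (hps : ∑ i, p i = 1)
    (b : Fin m → ℝ) (xhat : Fin n → ℝ) (hb : A.mulVec xhat = b)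
    (x : Fin n → ℝ)
    (D S : Matrix (Fin m) (Fin m) ℝ)
    (hD : D = Matrix.diagonal (fun i => p i / (A i ⬝ᵥ V i)))
    (hS : S = Matrix.diagonal (fun i => (enorm' (V i)) ^ 2 / (A i ⬝ᵥ V i)))
    (hM : (Vᵀ * D * A + Aᵀ * D * V - Aᵀ * S * D * A).IsHermitian)
    (lam : ℝ) (hlam : lam = ⨅ j, hM.eigenvalues j) :
    ∑ i, p i * (enorm' (x - ((A i ⬝ᵥ x - b i) / (A i ⬝ᵥ V i)) • V i - xhat)) ^ 2
      ≤ (1 - lam) * (enorm' (x - xhat)) ^ 2 := by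
  have hlam_le : ∀ j, lam ≤ hM.eigenvalues j :=
    fun j => hlam ▸ ciInf_le (Finite.bddBelow_range _) j
  have hrayleigh := hM.mul_dotProduct_self_le_dotProduct_mulVec hlam_le (x - xhat)
  have hmean := sum_mul_kaczmarz_error_dotProduct_self A V p hps (x - xhat)
  subst hD hS
  change ∑ i, p i * enorm' (kaczmarzStep A V b i x - xhat) ^ 2 ≤ _
  simp only [kaczmarzStep_sub_of_mulVec_eq hb, enorm'_sq] at hrayleigh ⊢
  linarith

theorem expected_squared_error_contraction {m n : ℕ} (A V : Matrix (Fin m) (Fin n) ℝ)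
    (p : Fin m → ℝ) (hp : ∀ i, 0 < p i) (hps : ∑ i, p i = 1)
    (hav : ∀ i, 0 < A i ⬝ᵥ V i)
    (b : Fin m → ℝ) (xhat : Fin n → ℝ) (hb : A.mulVec xhat = b)
    (x : Fin n → ℝ)
    (D S : Matrix (Fin m) (Fin m) ℝ)
    (hD : D = Matrix.diagonal (fun i => p i / (A i ⬝ᵥ V i)))
    (hS : S = Matrix.diagonal (fun i => (enorm' (V i)) ^ 2 / (A i ⬝ᵥ V i)))
    (hM : (Vᵀ * D * A + Aᵀ * D * V - Aᵀ * S * D * A).IsHermitian)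
    (lam : ℝ) (hlam : lam = ⨅ j, hM.eigenvalues j) (hlampos : 0 < lam) :
    ∑ i, p i * (enorm' (x - ((A i ⬝ᵥ x - b i) / (A i ⬝ᵥ V i)) • V i - xhat)) ^ 2
      ≤ (1 - lam) * (enorm' (x - xhat)) ^ 2 :=
  expected_squared_error_contraction_general A V p hps b xhat hb x D S hD hS hM lam hlam
end

section
/- Let (x_k) be iterates of the randomized Kaczmarz method with mismatched adjoint, consistent system A x̂ = b, and M = I − VᵀDA. Then E(x_k − x̂) = M^k (x_0 − x̂), and hence ‖E(x_k − x̂)‖ ≤ ‖I − VᵀDA‖^k·‖x_0 − x̂‖. In particular, if the spectral radius ρ(I − VᵀDA) < 1 then E(x_k − x̂) → 0 as k → ∞. -/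
open Matrix Finset

/-- Spectral (Euclidean operator) norm of a square real matrix. -/
noncomputable def specNorm {n : ℕ} (M : Matrix (Fin n) (Fin n) ℝ) : ℝ :=
  ‖LinearMap.toContinuousLinearMap (Matrix.toEuclideanLin M)‖

/-- Iterates of the randomized Kaczmarz method with mismatched adjoint along a given
sequence of chosen row indices `ω`. -/
noncomputable def rkmaIter {m n : ℕ} (A V : Matrix (Fin m) (Fin n) ℝ) (b : Fin m → ℝ)
    (x0 : Fin n → ℝ) : (k : ℕ) → (Fin k → Fin m) → (Fin n → ℝ)
  | 0, _ => x0
  | k + 1, ω =>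
      let x := rkmaIter A V b x0 k (fun j => ω j.castSucc)
      let i := ω (Fin.last k)
      x - ((A i ⬝ᵥ x - b i) / (A i ⬝ᵥ V i)) • V i

open Filter Topology

/-!
Conditioning on the first `k` indices, the error `eₖ = xₖ - x̂` is updated by the random map
`e ↦ e - (⟨aᵢ, e⟩ / ⟨aᵢ, vᵢ⟩) vᵢ`, which is linear because `b = A x̂`; its mean over `i ~ p` is
`e ↦ (I - VᵀDA) e`. Summing out the last index therefore multiplies the expected error by `M`,
so `E eₖ = Mᵏ e₀`. The norm bound follows from submultiplicativity of the operator norm, and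
`Mᵏ → 0` when `ρ(M) < 1` by Gelfand's formula applied to the complexification of `M`.
-/

section Expectation

variable {R E α : Type*} [CommSemiring R] [AddCommMonoid E] [Module R E] [Fintype α]

theorem sum_pi_fin_succ_prod_smul (p : α → R) {k : ℕ} (f : (Fin (k + 1) → α) → E) :
    ∑ ω : Fin (k + 1) → α, (∏ j, p (ω j)) • f ω =
      ∑ ω : Fin k → α, (∏ j, p (ω j)) • ∑ i, p i • f (Fin.snoc ω i) := by
  rw [← (Fin.snocEquiv fun _ => α).sum_comp, Fintype.sum_prod_type, Finset.sum_comm]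
  refine Finset.sum_congr rfl fun ω _ => ?_
  simp only [Fin.snocEquiv_apply, Fin.prod_univ_castSucc, Fin.snoc_castSucc, Fin.snoc_last,
    Finset.smul_sum, mul_smul]
  rfl

theorem sum_pi_prod_smul_eq_pow_apply (p : α → R) (L : E →ₗ[R] E)
    (x : (k : ℕ) → (Fin k → α) → E)
    (hx : ∀ k ω, ∑ i, p i • x (k + 1) (Fin.snoc ω i) = L (x k ω)) (k : ℕ) :
    ∑ ω : Fin k → α, (∏ j, p (ω j)) • x k ω = (L ^ k) (x 0 default) := by
  induction k with
  | zero => simp [Subsingleton.elim _ (default : Fin 0 → α)]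
  | succ k ih =>
    simp_rw [sum_pi_fin_succ_prod_smul, hx, ← map_smul, ← map_sum, ih, pow_succ',
      Module.End.mul_apply]

end Expectation

section Kaczmarz

variable {m n : ℕ} (A V : Matrix (Fin m) (Fin n) ℝ)

theorem rkmaIter_snoc_sub {b : Fin m → ℝ} {xhat : Fin n → ℝ} (hb : A *ᵥ xhat = b)
    (x0 : Fin n → ℝ) {k : ℕ} (ω : Fin k → Fin m) (i : Fin m) :
    rkmaIter A V b x0 (k + 1) (Fin.snoc ω i) - xhat =
      (rkmaIter A V b x0 k ω - xhat) -
        (A i ⬝ᵥ (rkmaIter A V b x0 k ω - xhat) / (A i ⬝ᵥ V i)) • V i := by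
  have hbi : b i = A i ⬝ᵥ xhat := by rw [← hb]; rfl
  simp only [rkmaIter, Fin.snoc_castSucc, Fin.snoc_last, hbi, dotProduct_sub]
  abel

theorem sum_smul_kaczmarz_step (p : Fin m → ℝ) (hps : ∑ i, p i = 1) (e : Fin n → ℝ) :
    ∑ i, p i • (e - (A i ⬝ᵥ e / (A i ⬝ᵥ V i)) • V i) =
      (1 - Vᵀ * diagonal (fun i => p i / (A i ⬝ᵥ V i)) * A) *ᵥ e := by
  rw [sub_mulVec, one_mulVec, ← mulVec_mulVec, ← mulVec_mulVec, mulVec_transpose,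
    vecMul_eq_sum]
  simp only [mulVec_diagonal, smul_sub, Finset.sum_sub_distrib, ← Finset.sum_smul, hps, one_smul,
    smul_smul]
  congr 2 with i
  rw [mul_div_assoc', div_mul_eq_mul_div]
  rfl

theorem sum_prod_smul_rkmaIter_sub (p : Fin m → ℝ) (hps : ∑ i, p i = 1) {b : Fin m → ℝ}
    {xhat : Fin n → ℝ} (hb : A *ᵥ xhat = b) (x0 : Fin n → ℝ) (k : ℕ) :
    ∑ ω : Fin k → Fin m, (∏ j, p (ω j)) • (rkmaIter A V b x0 k ω - xhat) =
      ((1 - Vᵀ * diagonal (fun i => p i / (A i ⬝ᵥ V i)) * A) ^ k) *ᵥ (x0 - xhat) := by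
  rw [← toLin'_apply, toLin'_pow]
  refine sum_pi_prod_smul_eq_pow_apply p _ (fun k ω => rkmaIter A V b x0 k ω - xhat)
    (fun k ω => ?_) k
  simp only [rkmaIter_snoc_sub A V hb, toLin'_apply]
  exact sum_smul_kaczmarz_step A V p hps _

end Kaczmarz

theorem enorm'_eq_norm {n : ℕ} (v : Fin n → ℝ) : enorm' v = ‖WithLp.toLp 2 v‖ := by
  simp [enorm', EuclideanSpace.norm_eq, dotProduct, sq]

theorem enorm'_mulVec_le {n : ℕ} (N : Matrix (Fin n) (Fin n) ℝ) (v : Fin n → ℝ) :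
    enorm' (N *ᵥ v) ≤ specNorm N * enorm' v := by
  rw [enorm'_eq_norm, enorm'_eq_norm]
  exact (LinearMap.toContinuousLinearMap (toEuclideanLin N)).le_opNorm _

theorem enorm'_pow_mulVec_le {n : ℕ} (N : Matrix (Fin n) (Fin n) ℝ) (k : ℕ) (v : Fin n → ℝ) :
    enorm' ((N ^ k) *ᵥ v) ≤ specNorm N ^ k * enorm' v := by
  induction k with
  | zero => simp
  | succ k ih =>
    rw [pow_succ', pow_succ', ← mulVec_mulVec, mul_assoc]
    exact (enorm'_mulVec_le N _).trans
      (mul_le_mul_of_nonneg_left ih (norm_nonneg _))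

theorem tendsto_pow_atTop_nhds_zero_of_spectralRadius_lt_one {𝔸 : Type*} [NormedRing 𝔸]
    [NormedAlgebra ℂ 𝔸] [CompleteSpace 𝔸] {a : 𝔸} (h : spectralRadius ℂ a < 1) :
    Tendsto (fun k : ℕ => a ^ k) atTop (𝓝 0) := by
  obtain ⟨r, hρr, hr1⟩ := ENNReal.lt_iff_exists_nnreal_btwn.mp h
  have hpow_lt : ∀ᶠ k : ℕ in atTop, ‖a ^ k‖ < (r : ℝ) ^ k := by
    filter_upwards [(spectrum.pow_nnnorm_pow_one_div_tendsto_nhds_spectralRadius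
      a).eventually_lt_const hρr, eventually_ge_atTop 1] with k hk hk1
    rw [one_div, ENNReal.rpow_inv_lt_iff (by positivity), ENNReal.rpow_natCast] at hk
    exact_mod_cast hk
  refine squeeze_zero_norm' (hpow_lt.mono fun k hk => hk.le) ?_
  exact tendsto_pow_atTop_nhds_zero_of_lt_one r.coe_nonneg (by exact_mod_cast hr1)

theorem Matrix.tendsto_pow_of_spectralRadius_map_lt_one {ι : Type*} [Fintype ι] [DecidableEq ι]
    (M : Matrix ι ι ℝ) (h : spectralRadius ℂ (M.map (algebraMap ℝ ℂ)) < 1) :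
    Tendsto (fun k : ℕ => M ^ k) atTop (𝓝 0) := by
  -- any algebra norm will do: all of them induce the product topology on matrices
  let := Matrix.linftyOpNormedRing (n := ι) (α := ℂ)
  let := Matrix.linftyOpNormedAlgebra (n := ι) (α := ℂ) (R := ℂ)
  have : CompleteSpace (Matrix ι ι ℂ) := FiniteDimensional.complete ℂ _
  have hre : Tendsto (fun k : ℕ => (M.map (algebraMap ℝ ℂ) ^ k).map Complex.re) atTop
      (𝓝 ((0 : Matrix ι ι ℂ).map Complex.re)) :=
    (continuous_id.matrix_map Complex.continuous_re).continuousAt.tendsto.comp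
      (tendsto_pow_atTop_nhds_zero_of_spectralRadius_lt_one h)
  convert hre using 2 with k
  · rw [← RingHom.mapMatrix_apply, ← map_pow, RingHom.mapMatrix_apply, map_map]
    ext
    simp
  · simp

theorem rkma_expectation_powers_general {m n : ℕ} (A V : Matrix (Fin m) (Fin n) ℝ)
    (p : Fin m → ℝ) (hps : ∑ i, p i = 1)
    (b : Fin m → ℝ) (xhat : Fin n → ℝ) (hb : A.mulVec xhat = b)
    (x0 : Fin n → ℝ)
    (D : Matrix (Fin m) (Fin m) ℝ)
    (hD : D = Matrix.diagonal (fun i => p i / (A i ⬝ᵥ V i)))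
    (M : Matrix (Fin n) (Fin n) ℝ) (hMdef : M = 1 - Vᵀ * D * A) :
    (∀ k : ℕ,
      ∑ ω : Fin k → Fin m, (∏ j, p (ω j)) • (rkmaIter A V b x0 k ω - xhat)
        = (M ^ k).mulVec (x0 - xhat)) ∧
    (∀ k : ℕ,
      enorm' (∑ ω : Fin k → Fin m, (∏ j, p (ω j)) • (rkmaIter A V b x0 k ω - xhat))
        ≤ (specNorm (1 - Vᵀ * D * A)) ^ k * enorm' (x0 - xhat)) ∧
    (spectralRadius ℂ ((1 - Vᵀ * D * A).map (algebraMap ℝ ℂ)) < 1 →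
      Filter.Tendsto
        (fun k => ∑ ω : Fin k → Fin m, (∏ j, p (ω j)) • (rkmaIter A V b x0 k ω - xhat))
        Filter.atTop (nhds 0)) := by
  subst hD hMdef
  have hmean := sum_prod_smul_rkmaIter_sub A V p hps hb x0
  refine ⟨hmean, fun k => ?_, fun hρ => ?_⟩
  · rw [hmean]
    exact enorm'_pow_mulVec_le _ k _
  · simp_rw [hmean]
    have hmulVec : Continuous fun N : Matrix (Fin n) (Fin n) ℝ => N *ᵥ (x0 - xhat) :=
      continuous_id.matrix_mulVec continuous_const
    simpa [Function.comp_def] using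
      (hmulVec.tendsto 0).comp (tendsto_pow_of_spectralRadius_map_lt_one _ hρ)

theorem rkma_expectation_powers {m n : ℕ} (A V : Matrix (Fin m) (Fin n) ℝ)
    (p : Fin m → ℝ) (hp : ∀ i, 0 < p i) (hps : ∑ i, p i = 1)
    (hav : ∀ i, 0 < A i ⬝ᵥ V i)
    (b : Fin m → ℝ) (xhat : Fin n → ℝ) (hb : A.mulVec xhat = b)
    (x0 : Fin n → ℝ)
    (D : Matrix (Fin m) (Fin m) ℝ)
    (hD : D = Matrix.diagonal (fun i => p i / (A i ⬝ᵥ V i)))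
    (M : Matrix (Fin n) (Fin n) ℝ) (hMdef : M = 1 - Vᵀ * D * A) :
    (∀ k : ℕ,
      ∑ ω : Fin k → Fin m, (∏ j, p (ω j)) • (rkmaIter A V b x0 k ω - xhat)
        = (M ^ k).mulVec (x0 - xhat)) ∧
    (∀ k : ℕ,
      enorm' (∑ ω : Fin k → Fin m, (∏ j, p (ω j)) • (rkmaIter A V b x0 k ω - xhat))
        ≤ (specNorm (1 - Vᵀ * D * A)) ^ k * enorm' (x0 - xhat)) ∧
    (spectralRadius ℂ ((1 - Vᵀ * D * A).map (algebraMap ℝ ℂ)) < 1 →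
      Filter.Tendsto
        (fun k => ∑ ω : Fin k → Fin m, (∏ j, p (ω j)) • (rkmaIter A V b x0 k ω - xhat))
        Filter.atTop (nhds 0)) :=
  rkma_expectation_powers_general A V p hps b xhat hb x0 D hD M hMdef
end

section
/- Let f(p) = λ_min(VᵀDA + AᵀDV − AᵀSDA) with D = diag(pᵢ/⟨aᵢ, vᵢ⟩), S = diag(sᵢ), sᵢ = ‖vᵢ‖²/⟨aᵢ, vᵢ⟩. If x is a unit eigenvector of VᵀDA + AᵀDV − AᵀSDA corresponding to the smallest eigenvalue at a point p, then the vector g with gᵢ = ⟨2vᵢ − sᵢaᵢ, x⟩⟨aᵢ, x⟩/⟨aᵢ, vᵢ⟩ is a supergradient of f at p, i.e., f(q) ≤ f(p) + ⟨g, q − p⟩ for all q ∈ ℝᵐ. -/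
/-! For a fixed vector `x`, the quadratic form `xᵀ M(q) x` is linear in `q`, namely `g ⬝ᵥ q`.
By the Rayleigh bound, `λ_min(M q) ≤ g ⬝ᵥ q` for every `q` when `x` is a unit vector, with
equality at `q = p` because `x` is a minimal eigenvector of `M p`; subtracting the two gives
the supergradient inequality. -/

open Matrix Finset

namespace Matrix

variable {m n R : Type*} [Fintype m] [Fintype n] [DecidableEq m]

lemma dotProduct_transpose_mul_diagonal_mul_mulVec [CommSemiring R]
    (C E : Matrix m n R) (d : m → R) (x : n → R) :
    x ⬝ᵥ (Cᵀ * diagonal d * E) *ᵥ x = ∑ i, d i * (C i ⬝ᵥ x) * (E i ⬝ᵥ x) := by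
  rw [Matrix.mul_assoc, ← mulVec_mulVec, dotProduct_mulVec, vecMul_transpose, ← mulVec_mulVec,
    dotProduct]
  exact sum_congr rfl fun i _ => by rw [mulVec_diagonal, mulVec, mulVec]; ring

lemma dotProduct_symmetrized_mulVec [CommRing R] (A V : Matrix m n R) (s d : m → R)
    (x : n → R) :
    x ⬝ᵥ (Vᵀ * diagonal d * A + Aᵀ * diagonal d * V - Aᵀ * diagonal s * diagonal d * A) *ᵥ x
      = ∑ i, d i * (((2 : R) • V i - s i • A i) ⬝ᵥ x) * (A i ⬝ᵥ x) := by
  rw [Matrix.mul_assoc Aᵀ (diagonal s), diagonal_mul_diagonal, sub_mulVec, add_mulVec,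
    dotProduct_sub, dotProduct_add, dotProduct_transpose_mul_diagonal_mul_mulVec,
    dotProduct_transpose_mul_diagonal_mul_mulVec, dotProduct_transpose_mul_diagonal_mul_mulVec,
    ← sum_add_distrib, ← sum_sub_distrib]
  refine sum_congr rfl fun i _ => ?_
  rw [sub_dotProduct, smul_dotProduct, smul_dotProduct, smul_eq_mul, smul_eq_mul,
    dotProduct_comm (V i)]
  ring

end Matrix

namespace Matrix.IsHermitian

variable {n : Type*} [Fintype n] [DecidableEq n] {B : Matrix n n ℝ}

lemma iInf_eigenvalues_mul_dotProduct_self_le (hB : B.IsHermitian) (x : n → ℝ) :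
    (⨅ j, hB.eigenvalues j) * (x ⬝ᵥ x) ≤ x ⬝ᵥ B *ᵥ x := by
  set U : Matrix n n ℝ := (hB.eigenvectorUnitary : Matrix n n ℝ)
  have hUUt : U * Uᵀ = 1 := by
    simpa [U, star_eq_conjTranspose] using Unitary.mul_star_self_of_mem hB.eigenvectorUnitary.2
  -- in the eigenbasis `Uᵀ x`, both quadratic forms are diagonal
  have hself : x ⬝ᵥ x = ∑ j, 1 * (Uᵀ j ⬝ᵥ x) * (Uᵀ j ⬝ᵥ x) := by
    rw [← dotProduct_transpose_mul_diagonal_mul_mulVec, diagonal_one, Matrix.mul_one,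
      transpose_transpose, hUUt, one_mulVec]
  have hform : x ⬝ᵥ B *ᵥ x = ∑ j, hB.eigenvalues j * (Uᵀ j ⬝ᵥ x) * (Uᵀ j ⬝ᵥ x) := by
    rw [← dotProduct_transpose_mul_diagonal_mul_mulVec, transpose_transpose]
    conv_lhs => rw [hB.spectral_theorem]
    simp [U, star_eq_conjTranspose]
  rw [hself, hform, mul_sum]
  refine sum_le_sum fun j _ => ?_
  rw [one_mul, mul_assoc]
  exact mul_le_mul_of_nonneg_right (ciInf_le (Set.finite_range _).bddBelow j)
    (mul_self_nonneg _)

end Matrix.IsHermitian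

theorem supergradient_of_lambda_min_general {m n : ℕ}
    (A V : Matrix (Fin m) (Fin n) ℝ)
    (s : Fin m → ℝ)
    (M : (Fin m → ℝ) → Matrix (Fin n) (Fin n) ℝ)
    (hMdef : ∀ q, M q =
      Vᵀ * Matrix.diagonal (fun i => q i / (A i ⬝ᵥ V i)) * A
      + Aᵀ * Matrix.diagonal (fun i => q i / (A i ⬝ᵥ V i)) * V
      - Aᵀ * Matrix.diagonal s * Matrix.diagonal (fun i => q i / (A i ⬝ᵥ V i)) * A)
    (hM : ∀ q, (M q).IsHermitian)
    (p : Fin m → ℝ) (x : Fin n → ℝ) (hx : enorm' x = 1)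
    (heig : (M p).mulVec x = (⨅ j, (hM p).eigenvalues j) • x)
    (g : Fin m → ℝ)
    (hg : g = fun i => (((2 : ℝ) • V i - s i • A i) ⬝ᵥ x) * (A i ⬝ᵥ x) / (A i ⬝ᵥ V i)) :
    ∀ q : Fin m → ℝ,
      (⨅ j, (hM q).eigenvalues j) ≤ (⨅ j, (hM p).eigenvalues j) + g ⬝ᵥ (q - p) := by
  have hx1 : x ⬝ᵥ x = 1 := by rw [← enorm'_sq, hx, one_pow]
  have hquad : ∀ q, x ⬝ᵥ M q *ᵥ x = g ⬝ᵥ q := by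
    intro q
    rw [hMdef, dotProduct_symmetrized_mulVec, hg, dotProduct]
    exact sum_congr rfl fun i _ => by ring
  have hgp : g ⬝ᵥ p = ⨅ j, (hM p).eigenvalues j := by
    rw [← hquad, heig, dotProduct_smul, hx1, smul_eq_mul, mul_one]
  intro q
  calc (⨅ j, (hM q).eigenvalues j) ≤ x ⬝ᵥ M q *ᵥ x := by
        simpa [hx1] using (hM q).iInf_eigenvalues_mul_dotProduct_self_le x
    _ = g ⬝ᵥ q := hquad q
    _ = (⨅ j, (hM p).eigenvalues j) + g ⬝ᵥ (q - p) := by rw [dotProduct_sub, hgp]; ring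

theorem supergradient_of_lambda_min {m n : ℕ} (hn : 0 < n)
    (A V : Matrix (Fin m) (Fin n) ℝ)
    (hav : ∀ i, 0 < A i ⬝ᵥ V i)
    (s : Fin m → ℝ) (hs : s = fun i => (enorm' (V i)) ^ 2 / (A i ⬝ᵥ V i))
    (M : (Fin m → ℝ) → Matrix (Fin n) (Fin n) ℝ)
    (hMdef : ∀ q, M q =
      Vᵀ * Matrix.diagonal (fun i => q i / (A i ⬝ᵥ V i)) * A
      + Aᵀ * Matrix.diagonal (fun i => q i / (A i ⬝ᵥ V i)) * V
      - Aᵀ * Matrix.diagonal s * Matrix.diagonal (fun i => q i / (A i ⬝ᵥ V i)) * A)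
    (hM : ∀ q, (M q).IsHermitian)
    (p : Fin m → ℝ) (x : Fin n → ℝ) (hx : enorm' x = 1)
    (heig : (M p).mulVec x = (⨅ j, (hM p).eigenvalues j) • x)
    (g : Fin m → ℝ)
    (hg : g = fun i => (((2 : ℝ) • V i - s i • A i) ⬝ᵥ x) * (A i ⬝ᵥ x) / (A i ⬝ᵥ V i)) :
    ∀ q : Fin m → ℝ,
      (⨅ j, (hM q).eigenvalues j) ≤ (⨅ j, (hM p).eigenvalues j) + g ⬝ᵥ (q - p) :=
  supergradient_of_lambda_min_general A V s M hMdef hM p x hx heig g hg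
end
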